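/- arXiv:2001.07335 — 3 statements merged into one kernel-verified Lean document; each statement's English description precedes it below -/
import Mathlib

section
/- Let m ≥ 1, let s̃_{k−m}, …, s̃_k and ỹ_k be vectors in ℝⁿ, let S̃_k = [s̃_{k−m}, …, s̃_{k−1}] and S̃_{k+1} = [s̃_{k+1−m}, …, s̃_k], let L ∈ ℝ^{m×m}, and let t ∈ ℝᵐ satisfy S̃_{k+1} t = s̃_{k−m}. Then the BFGS update of H = S̃_k L S̃_kᵀ by (s̃_k, ỹ_k) equals S̃_{k+1} · (T(t) L T(t)ᵀ + E_m) · S̃_{k+1}ᵀ. -/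
open Matrix

set_option linter.unusedSectionVars false
section Aux
variable {ι κ ρ : Type*} [Fintype ι] [Fintype κ] [Fintype ρ] [DecidableEq ι] [DecidableEq κ] [DecidableEq ρ]

lemma mul_vecMulVec' (M : Matrix ι κ ℝ) (u : κ → ℝ) (v : ρ → ℝ) :
    M * Matrix.vecMulVec u v = Matrix.vecMulVec (M.mulVec u) v := by
  ext i j
  simp [Matrix.mul_apply, Matrix.vecMulVec_apply, Matrix.mulVec, dotProduct,
    Finset.sum_mul, mul_assoc]

lemma transpose_vecMulVec' (u : ι → ℝ) (v : κ → ℝ) :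
    (Matrix.vecMulVec u v)ᵀ = Matrix.vecMulVec v u := by
  ext i j; simp [Matrix.vecMulVec_apply, mul_comm]

lemma vecMulVec_mul_transpose' (M : Matrix ρ κ ℝ) (u : ι → ℝ) (v : κ → ℝ) :
    Matrix.vecMulVec u v * Mᵀ = Matrix.vecMulVec u (M.mulVec v) := by
  ext i j
  simp only [Matrix.mul_apply, Matrix.vecMulVec_apply, Matrix.mulVec, dotProduct,
    Matrix.transpose_apply, Finset.mul_sum]
  exact Finset.sum_congr rfl fun x _ => by ring

end Aux


/-- The BFGS update of `H` by the pair `(s, y)`: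
`(I - s yᵀ) H (I - y sᵀ) + s sᵀ`. -/
def bfgsUpdate {ι : Type*} [Fintype ι] [DecidableEq ι]
    (H : Matrix ι ι ℝ) (s y : ι → ℝ) : Matrix ι ι ℝ :=
  (1 - Matrix.vecMulVec s y) * H * (1 - Matrix.vecMulVec y s) + Matrix.vecMulVec s s

/-- The `m × m` matrix whose last diagonal entry is `1` and all other entries are `0`. -/
def Emat (m : ℕ) : Matrix (Fin m) (Fin m) ℝ :=
  Matrix.of fun i j => if (i : ℕ) = m - 1 ∧ (j : ℕ) = m - 1 then 1 else 0

/-- `S̃_k = [s̃_{k-m}, …, s̃_{k-1}]`: here `s i` denotes `s̃_{k-m+i}` for `i : Fin (m+1)`,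
and this matrix has columns `s 0, …, s (m-1)`. -/
def Stil0 {n m : ℕ} (s : Fin (m + 1) → Fin n → ℝ) : Matrix (Fin n) (Fin m) ℝ :=
  Matrix.of fun i j => s j.castSucc i

/-- `S̃_{k+1} = [s̃_{k+1-m}, …, s̃_k]`: with `s i` denoting `s̃_{k-m+i}`, this matrix has
columns `s 1, …, s m`. -/
def Stil1 {n m : ℕ} (s : Fin (m + 1) → Fin n → ℝ) : Matrix (Fin n) (Fin m) ℝ :=
  Matrix.of fun i j => s j.succ i

/-- The `m × m` matrix `T(t)` (0-indexed): column `0` has entries `t i` for `i < m-1` and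
`t (m-1) - ỹᵀ s̃_{k-m}` in row `m-1`; column `j ≥ 1` has a `1` in row `j-1` and
`-ỹᵀ s̃_{k-m+j}` in row `m-1`; all other entries are `0`. -/
def Tmat {n m : ℕ} (s : Fin (m + 1) → Fin n → ℝ) (y : Fin n → ℝ) (t : Fin m → ℝ) :
    Matrix (Fin m) (Fin m) ℝ :=
  Matrix.of fun i j =>
    if (j : ℕ) = 0 then
      (if (i : ℕ) = m - 1 then t i - y ⬝ᵥ s 0 else t i)
    else if (i : ℕ) + 1 = (j : ℕ) then 1
    else if (i : ℕ) = m - 1 then -(y ⬝ᵥ s j.castSucc)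
    else 0

/-- If `S̃_{k+1} t = s̃_{k-m}`, then the BFGS update of `H = S̃_k L S̃_kᵀ` by `(s̃_k, ỹ_k)`
equals `S̃_{k+1} (T(t) L T(t)ᵀ + E_m) S̃_{k+1}ᵀ`. -/
theorem stmt_8 (n m : ℕ) (hm : 1 ≤ m) (s : Fin (m + 1) → Fin n → ℝ) (y : Fin n → ℝ)
    (L : Matrix (Fin m) (Fin m) ℝ) (t : Fin m → ℝ) (ht : (Stil1 s).mulVec t = s 0) :
    bfgsUpdate (Stil0 s * L * (Stil0 s)ᵀ) (s (Fin.last m)) y =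
      Stil1 s * (Tmat s y t * L * (Tmat s y t)ᵀ + Emat m) * (Stil1 s)ᵀ := by
  obtain ⟨m', rfl⟩ : ∃ m', m = m' + 1 := ⟨m - 1, by omega⟩
  set sm : Fin n → ℝ := s (Fin.last (m' + 1)) with hsm
  -- decomposition of Tmat
  set A : Matrix (Fin (m' + 1)) (Fin (m' + 1)) ℝ :=
    Matrix.of (fun i j => if (j : ℕ) = 0 then t i
      else if (i : ℕ) + 1 = (j : ℕ) then 1 else 0) with hAdef
  set e : Fin (m' + 1) → ℝ := fun l => if l = Fin.last m' then 1 else 0 with hedef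
  set r : Fin (m' + 1) → ℝ := fun j => -(y ⬝ᵥ s j.castSucc) with hrdef
  have hT : Tmat s y t = A + Matrix.vecMulVec e r := by
    ext i j
    simp only [Tmat, hAdef, hedef, hrdef, Matrix.add_apply, Matrix.vecMulVec_apply,
      Matrix.of_apply, Nat.add_sub_cancel]
    by_cases hj : (j : ℕ) = 0
    · have hj0 : j = 0 := Fin.ext hj
      by_cases hi : (i : ℕ) = m'
      · have : i = Fin.last m' := Fin.ext (by simpa using hi)
        simp [hj, hi, this, hj0, Fin.castSucc_zero]
        ring
      · have : ¬ i = Fin.last m' := fun h => hi (by simp [h])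
        simp [hj, hi, this]
    · by_cases hij : (i : ℕ) + 1 = (j : ℕ)
      · have hi : ¬ (i : ℕ) = m' := by
          have := j.isLt; omega
        have : ¬ i = Fin.last m' := fun h => hi (by simp [h])
        simp [hj, hij, hi, this]
      · by_cases hi : (i : ℕ) = m'
        · have hlast : i = Fin.last m' := Fin.ext (by simpa using hi)
          have h2 : ¬ (m' + 1 = (j : ℕ)) := by omega
          simp [hj, hi, h2, hlast]
        · have : ¬ i = Fin.last m' := fun h => hi (by simp [h])
          simp [hj, hij, hi, this]
  have hA : Stil1 s * A = Stil0 s := by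
    ext i j
    rw [Matrix.mul_apply]
    by_cases hj : (j : ℕ) = 0
    · have hj0 : j = 0 := Fin.ext hj
      have := congrFun ht i
      simp only [Matrix.mulVec, dotProduct, Stil1, Matrix.of_apply] at this
      simpa [Stil1, Stil0, hAdef, hj0, Fin.castSucc_zero] using this
    · have hjlt : (j : ℕ) - 1 < m' + 1 := by have := j.isLt; omega
      let c : Fin (m' + 1) := ⟨(j : ℕ) - 1, hjlt⟩
      have hcv : (c : ℕ) = (j : ℕ) - 1 := rfl
      have hcond : ∀ l : Fin (m' + 1), ((l : ℕ) + 1 = (j : ℕ)) = (l = c) := fun l =>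
        propext (by rw [Fin.ext_iff, hcv]; omega)
      have hterm : ∀ l : Fin (m' + 1), Stil1 s i l * A l j =
          if l = c then s l.succ i else 0 := by
        intro l
        simp only [Stil1, hAdef, Matrix.of_apply, if_neg hj, hcond l, mul_ite, mul_one, mul_zero]
      rw [Finset.sum_congr rfl fun l _ => hterm l, Finset.sum_ite_eq' Finset.univ c]
      have hv : (c.succ : ℕ) = (j.castSucc : ℕ) := by
        simp only [Fin.val_succ, Fin.coe_castSucc, hcv]; omega
      simp [Stil0, show c.succ = j.castSucc from Fin.ext hv]
  have he : (Stil1 s).mulVec e = sm := by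
    funext i
    simp only [Matrix.mulVec, dotProduct, Stil1, Matrix.of_apply, hedef,
      mul_ite, mul_one, mul_zero, Finset.sum_ite_eq' Finset.univ, Finset.mem_univ, if_true]
    congr 1
  have key : (1 - Matrix.vecMulVec sm y) * Stil0 s = Stil1 s * Tmat s y t := by
    rw [hT, Matrix.mul_add, hA, mul_vecMulVec', he, Matrix.sub_mul, Matrix.one_mul]
    congr 1
    have : Matrix.vecMulVec sm y * Stil0 s =
        Matrix.vecMulVec sm (((Stil0 s)ᵀ).mulVec y) := by
      have := vecMulVec_mul_transpose' ((Stil0 s)ᵀ) sm y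
      rwa [Matrix.transpose_transpose] at this
    rw [this]
    have hneg : r = -(((Stil0 s)ᵀ).mulVec y) := by
      funext j
      simp only [hrdef, Pi.neg_apply, Matrix.mulVec, dotProduct, Matrix.transpose_apply,
        Stil0, Matrix.of_apply, neg_inj]
      exact Finset.sum_congr rfl fun l _ => mul_comm _ _
    rw [hneg]
    ext i j
    simp [Matrix.vecMulVec_apply, sub_eq_add_neg]
  have hEe : Emat (m' + 1) = Matrix.vecMulVec e e := by
    ext i j
    simp only [Emat, Matrix.of_apply, Matrix.vecMulVec_apply, hedef, Nat.add_sub_cancel,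
      Fin.ext_iff, Fin.val_last]
    by_cases hi : (i : ℕ) = m' <;> by_cases hj2 : (j : ℕ) = m' <;> simp [hi, hj2]
  have hE : Matrix.vecMulVec sm sm = Stil1 s * Emat (m' + 1) * (Stil1 s)ᵀ := by
    rw [hEe, mul_vecMulVec', he, vecMulVec_mul_transpose', he]
  -- final assembly
  have hytrans : (1 : Matrix (Fin n) (Fin n) ℝ) - Matrix.vecMulVec y sm =
      (1 - Matrix.vecMulVec sm y)ᵀ := by
    rw [Matrix.transpose_sub, Matrix.transpose_one, transpose_vecMulVec']
  rw [bfgsUpdate, hytrans]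
  calc (1 - Matrix.vecMulVec sm y) * (Stil0 s * L * (Stil0 s)ᵀ) *
        (1 - Matrix.vecMulVec sm y)ᵀ + Matrix.vecMulVec sm sm
      = ((1 - Matrix.vecMulVec sm y) * Stil0 s) * L *
          ((1 - Matrix.vecMulVec sm y) * Stil0 s)ᵀ + Matrix.vecMulVec sm sm := by
        simp only [Matrix.transpose_mul, ← Matrix.mul_assoc]
    _ = (Stil1 s * Tmat s y t) * L * (Stil1 s * Tmat s y t)ᵀ +
          Stil1 s * Emat (m' + 1) * (Stil1 s)ᵀ := by rw [key, hE]
    _ = Stil1 s * (Tmat s y t * L * (Tmat s y t)ᵀ + Emat (m' + 1)) * (Stil1 s)ᵀ := by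
        simp only [Matrix.transpose_mul, Matrix.mul_add, Matrix.add_mul, ← Matrix.mul_assoc]
end

section
/- Let m ≥ 1 and let (s̃_k)_{k≥0}, (ỹ_k)_{k≥0} be sequences in ℝⁿ. For k ≥ m write S̃_k = [s̃_{k−m}, …, s̃_{k−1}] ∈ ℝ^{n×m}. Suppose that for every k ≥ m there exists t^{(k)} ∈ ℝᵐ with S̃_{k+1} t^{(k)} = s̃_{k−m}. Let L̂_{m−1} ∈ ℝ^{m×m}, define L̂_k = T_k(t^{(k)}) L̂_{k−1} T_k(t^{(k)})ᵀ + E_m for k ≥ m, and let (H_k)_{k≥m} satisfy H_m = S̃_m L̂_{m−1} S̃_mᵀ and H_{k+1} equal to the BFGS update of H_k by (s̃_k, ỹ_k). Then H_k = S̃_k L̂_{k−1} S̃_kᵀ for every k ≥ m. -/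
open Matrix

/-- `S̃_k = [s̃_{k-m}, …, s̃_{k-1}]`, the `n × m` matrix whose `j`-th column is
`s̃_{k-m+j}` (`0 ≤ j ≤ m-1`). -/
def Stil {n : ℕ} (s : ℕ → Fin n → ℝ) (m k : ℕ) : Matrix (Fin n) (Fin m) ℝ :=
  Matrix.of fun i j => s (k - m + (j : ℕ)) i

/-- The `m × m` matrix `T_k(t)` (0-indexed): column `0` has entries `t i` for `i < m-1` and
`t (m-1) - ỹ_kᵀ s̃_{k-m}` in row `m-1`; column `j ≥ 1` has a `1` in row `j-1` and
`-ỹ_kᵀ s̃_{k-m+j}` in row `m-1`; all other entries are `0`. -/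
def TmatSeq {n : ℕ} (s y : ℕ → Fin n → ℝ) (m k : ℕ) (t : Fin m → ℝ) :
    Matrix (Fin m) (Fin m) ℝ :=
  Matrix.of fun i j =>
    if (j : ℕ) = 0 then
      (if (i : ℕ) = m - 1 then t i - y k ⬝ᵥ s (k - m) else t i)
    else if (i : ℕ) + 1 = (j : ℕ) then 1
    else if (i : ℕ) = m - 1 then -(y k ⬝ᵥ s (k - m + (j : ℕ)))
    else 0

lemma sum_ite_val {m : ℕ} {M : Type*} [AddCommMonoid M] (c : ℕ) (hc : c < m) (f : Fin m → M) :
    (∑ l : Fin m, if (l : ℕ) = c then f l else 0) = f ⟨c, hc⟩ := by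
  have h : ∀ l : Fin m, ((l : ℕ) = c) = (l = ⟨c, hc⟩) := fun l =>
    propext ⟨fun h => Fin.ext h, fun h => by rw [h]⟩
  simp only [h, Finset.sum_ite_eq' Finset.univ, Finset.mem_univ, if_true]

lemma keyB {n m : ℕ} (hm : 1 ≤ m) (s : ℕ → Fin n → ℝ) (k : ℕ) (hk : m ≤ k) :
    Stil s m (k+1) * Emat m * (Stil s m (k+1))ᵀ = Matrix.vecMulVec (s k) (s k) := by
  have hm1 : m - 1 < m := by omega
  have hk' : k + 1 - m + (m - 1) = k := by omega
  ext i j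
  simp only [Matrix.mul_apply, Finset.sum_mul, Emat, Matrix.of_apply, Matrix.transpose_apply,
    Stil, mul_ite, mul_one, mul_zero, ite_mul, zero_mul, ite_and]
  rw [Finset.sum_congr rfl fun b _ => sum_ite_val (m-1) hm1 _, sum_ite_val (m-1) hm1 _]
  simp [hk', Matrix.vecMulVec_apply]

lemma keyA {n m : ℕ} (hm : 1 ≤ m) (s y : ℕ → Fin n → ℝ) (k : ℕ) (hk : m ≤ k)
    (t : Fin m → ℝ) (ht : (Stil s m (k+1)).mulVec t = s (k - m)) :
    Stil s m (k+1) * TmatSeq s y m k t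
      = (1 - Matrix.vecMulVec (s k) (y k)) * Stil s m k := by
  have hk' : k + 1 - m + (m - 1) = k := by omega
  ext i j
  rw [Matrix.sub_mul, Matrix.one_mul, Matrix.sub_apply, Matrix.mul_apply, Matrix.mul_apply]
  simp only [Stil, TmatSeq, Matrix.of_apply, Matrix.vecMulVec_apply]
  rcases Nat.eq_zero_or_pos (j : ℕ) with hj | hj
  · have hht := congrFun ht i
    simp only [Matrix.mulVec, dotProduct, Stil, Matrix.of_apply] at hht
    simp only [hj, eq_self_iff_true, if_true]
    have step : ∀ l : Fin m, s (k + 1 - m + (l:ℕ)) i *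
        (if (l:ℕ) = m - 1 then t l - y k ⬝ᵥ s (k - m) else t l)
        = s (k + 1 - m + (l:ℕ)) i * t l
          - (if (l:ℕ) = m - 1 then s (k + 1 - m + (l:ℕ)) i * (y k ⬝ᵥ s (k - m)) else 0) := by
      intro l
      by_cases h : (l:ℕ) = m - 1
      · rw [if_pos h, if_pos h]; ring
      · rw [if_neg h, if_neg h]; ring
    rw [Finset.sum_congr rfl (fun l _ => step l), Finset.sum_sub_distrib,
      sum_ite_val (m-1) (by omega) _, hht]
    simp only [hk', hj, add_zero]
    rw [dotProduct]
    simp only [Finset.mul_sum, ← mul_assoc]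
  · simp only [eq_false (by omega : ¬ ((j:ℕ) = 0)), if_false]
    have step : ∀ l : Fin m, s (k + 1 - m + (l:ℕ)) i *
        (if (l:ℕ) + 1 = (j:ℕ) then 1
          else if (l:ℕ) = m - 1 then -(y k ⬝ᵥ s (k - m + (j:ℕ))) else 0)
        = (if (l:ℕ) = (j:ℕ) - 1 then s (k + 1 - m + (l:ℕ)) i else 0)
          + (if (l:ℕ) = m - 1 then -(s (k + 1 - m + (l:ℕ)) i * (y k ⬝ᵥ s (k - m + (j:ℕ)))) else 0) := by
      intro l
      have hjm : (j:ℕ) ≤ m - 1 := by omega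
      by_cases h1 : (l:ℕ) + 1 = (j:ℕ)
      · rw [if_pos h1, if_pos (show (l:ℕ) = (j:ℕ) - 1 by omega),
          if_neg (show ¬ (l:ℕ) = m - 1 by omega)]; ring
      · rw [if_neg h1, if_neg (show ¬ (l:ℕ) = (j:ℕ) - 1 by omega)]
        by_cases h2 : (l:ℕ) = m - 1
        · rw [if_pos h2, if_pos h2]; ring
        · rw [if_neg h2, if_neg h2]; ring
    rw [Finset.sum_congr rfl (fun l _ => step l), Finset.sum_add_distrib,
      sum_ite_val ((j:ℕ)-1) (by omega) _, sum_ite_val (m-1) (by omega) _]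
    simp only [hk']
    have h2 : k + 1 - m + ((j:ℕ) - 1) = k - m + (j:ℕ) := by omega
    rw [h2, dotProduct, sub_eq_add_neg]
    simp only [Finset.mul_sum, ← mul_assoc]

lemma vecMulVec_transpose' {n : ℕ} (w v : Fin n → ℝ) :
    (Matrix.vecMulVec w v)ᵀ = Matrix.vecMulVec v w := by
  ext i j; simp [Matrix.vecMulVec_apply, mul_comm]


/-- Suppose for every `k ≥ m` there is `t⁽ᵏ⁾` with `S̃_{k+1} t⁽ᵏ⁾ = s̃_{k-m}`, the matrices
`L̂_k` satisfy `L̂_k = T_k(t⁽ᵏ⁾) L̂_{k-1} T_k(t⁽ᵏ⁾)ᵀ + E_m` for `k ≥ m`,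
`H_m = S̃_m L̂_{m-1} S̃_mᵀ` and `H_{k+1}` is the BFGS update of `H_k` by `(s̃_k, ỹ_k)`.
Then `H_k = S̃_k L̂_{k-1} S̃_kᵀ` for every `k ≥ m`. -/
theorem stmt_9 (n m : ℕ) (hm : 1 ≤ m) (s y : ℕ → Fin n → ℝ)
    (t : ℕ → Fin m → ℝ)
    (ht : ∀ k, m ≤ k → (Stil s m (k + 1)).mulVec (t k) = s (k - m))
    (Lh : ℕ → Matrix (Fin m) (Fin m) ℝ)
    (H : ℕ → Matrix (Fin n) (Fin n) ℝ)
    (hL : ∀ k, m ≤ k →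
      Lh k = TmatSeq s y m k (t k) * Lh (k - 1) * (TmatSeq s y m k (t k))ᵀ + Emat m)
    (hHm : H m = Stil s m m * Lh (m - 1) * (Stil s m m)ᵀ)
    (hH : ∀ k, m ≤ k → H (k + 1) = bfgsUpdate (H k) (s k) (y k)) :
    ∀ k, m ≤ k → H k = Stil s m k * Lh (k - 1) * (Stil s m k)ᵀ := by
  intro k hk
  induction k, hk using Nat.le_induction with
  | base => exact hHm
  | succ k hk ih =>
    have hT := keyA hm s y k hk (t k) (ht k hk)
    have hE := keyB hm s k hk
    have h1 : k + 1 - 1 = k := by omega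
    rw [hH k hk, bfgsUpdate, ih, h1, hL k hk]
    have hTt : (TmatSeq s y m k (t k))ᵀ * (Stil s m (k + 1))ᵀ
        = (Stil s m k)ᵀ * (1 - Matrix.vecMulVec (y k) (s k)) := by
      rw [← Matrix.transpose_mul, hT, Matrix.transpose_mul, Matrix.transpose_sub,
        Matrix.transpose_one, vecMulVec_transpose']
    rw [Matrix.mul_add, Matrix.add_mul, hE]
    congr 1
    calc (1 - Matrix.vecMulVec (s k) (y k)) * (Stil s m k * Lh (k - 1) * (Stil s m k)ᵀ) *
          (1 - Matrix.vecMulVec (y k) (s k))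
        = ((1 - Matrix.vecMulVec (s k) (y k)) * Stil s m k) * Lh (k - 1) *
          ((Stil s m k)ᵀ * (1 - Matrix.vecMulVec (y k) (s k))) := by
          simp only [Matrix.mul_assoc]
      _ = (Stil s m (k + 1) * TmatSeq s y m k (t k)) * Lh (k - 1) *
          ((TmatSeq s y m k (t k))ᵀ * (Stil s m (k + 1))ᵀ) := by rw [hT, hTt]
      _ = Stil s m (k + 1) * (TmatSeq s y m k (t k) * Lh (k - 1) * (TmatSeq s y m k (t k))ᵀ) *
          (Stil s m (k + 1))ᵀ := by simp only [Matrix.mul_assoc]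
end

section
/- Let U ∈ ℝ^{n×m} satisfy UᵀU = I_m. Let m ≥ 1, let s̃_{k−m}, …, s̃_k and ỹ_k be vectors in ℝⁿ with each of s̃_{k−m}, …, s̃_k lying in the column space of U, let S̃_k = [s̃_{k−m}, …, s̃_{k−1}] and S̃_{k+1} = [s̃_{k+1−m}, …, s̃_k], let L ∈ ℝ^{m×m}, and let t ∈ ℝᵐ satisfy S̃_{k+1} t = s̃_{k−m}. Set H̃ = S̃_k L S̃_kᵀ and H̃⁺ = S̃_{k+1} (T(t) L T(t)ᵀ + E_m) S̃_{k+1}ᵀ. Then the BFGS update of Uᵀ H̃ U by the pair (Uᵀ s̃_k, Uᵀ ỹ_k) equals Uᵀ H̃⁺ U. -/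
open Matrix

/-!
Column by column, `S̃_{k+1} T(t) = (I - s̃_k ỹ_kᵀ) S̃_k`: the first column of `T(t)` rebuilds
`s̃_{k-m} = S̃_{k+1} t`, the superdiagonal shifts `S̃_{k+1}` back by one column, and the last row
subtracts `(ỹ_kᵀ s̃_j) s̃_k`. As the `s̃_j` lie in the column space of `U`, `U Uᵀ` fixes them, so
compressing by `Uᵀ` turns `I - s̃_k ỹ_kᵀ` into `I - σ ηᵀ` with `σ = Uᵀ s̃_k`, `η = Uᵀ ỹ_k`.
Writing the BFGS update of `A L Aᵀ` as `((I - σηᵀ) A) L ((I - σηᵀ) A)ᵀ + σσᵀ`, the first term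
is the `T(t) L T(t)ᵀ` part of `H̃⁺` and `σσᵀ` is its `E_m` part.
-/

section Projection

variable {R : Type*} [CommRing R] {n m κ : Type*} [Fintype n] [Fintype m] [DecidableEq m]
  {U : Matrix n m R}

theorem Matrix.mulVec_transpose_mulVec_of_mem_span (hU : Uᵀ * U = 1) {v : n → R}
    (hv : v ∈ Submodule.span R (Set.range Uᵀ)) : U *ᵥ (Uᵀ *ᵥ v) = v := by
  obtain ⟨c, rfl⟩ : ∃ c, U *ᵥ c = v := by
    change v ∈ Submodule.span R (Set.range U.col) at hv
    rwa [← range_mulVecLin] at hv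
  rw [mulVec_mulVec c Uᵀ U, hU, one_mulVec]

theorem Matrix.mul_transpose_mul_of_forall_mem_span (hU : Uᵀ * U = 1) {S : Matrix n κ R}
    (hS : ∀ j, Sᵀ j ∈ Submodule.span R (Set.range Uᵀ)) : U * Uᵀ * S = S := by
  ext i j
  have hcol := congrFun (mulVec_transpose_mulVec_of_mem_span hU (hS j)) i
  rwa [mulVec_mulVec] at hcol

theorem Matrix.transpose_mul_one_sub_vecMulVec_mul [DecidableEq n] {S : Matrix n κ R}
    (hS : U * Uᵀ * S = S) (a y : n → R) :
    Uᵀ * ((1 - vecMulVec a y) * S) = (1 - vecMulVec (Uᵀ *ᵥ a) (Uᵀ *ᵥ y)) * (Uᵀ * S) := by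
  rw [Matrix.sub_mul, Matrix.sub_mul, Matrix.one_mul, Matrix.one_mul, Matrix.mul_sub,
    vecMulVec_mul, vecMulVec_mul, mul_vecMulVec, mulVec_transpose U y, vecMul_vecMul,
    ← Matrix.mul_assoc, hS]

end Projection

theorem bfgsUpdate_mul_mul_transpose {ι κ : Type*} [Fintype ι] [DecidableEq ι] [Fintype κ]
    (A : Matrix ι κ ℝ) (L : Matrix κ κ ℝ) (s y : ι → ℝ) :
    bfgsUpdate (A * L * Aᵀ) s y =
      (1 - vecMulVec s y) * A * L * ((1 - vecMulVec s y) * A)ᵀ + vecMulVec s s := by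
  rw [bfgsUpdate, transpose_mul, transpose_sub, transpose_one, transpose_vecMulVec]
  simp only [Matrix.mul_assoc]

theorem mul_Emat_mul_transpose {ι : Type*} [Fintype ι] {m : ℕ} (M : Matrix ι (Fin (m + 1)) ℝ) :
    M * Emat (m + 1) * Mᵀ =
      vecMulVec (M *ᵥ Pi.single (Fin.last m) 1) (M *ᵥ Pi.single (Fin.last m) 1) := by
  have hE : Emat (m + 1) = vecMulVec (Pi.single (Fin.last m) 1) (Pi.single (Fin.last m) 1) := by
    ext i j
    by_cases hi : (i : ℕ) = m <;> simp [Emat, vecMulVec_apply, Pi.single_apply, Fin.ext_iff, hi]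
  rw [hE, mul_vecMulVec, vecMulVec_mul, vecMul_transpose]

section Columns

variable {n m : ℕ}

theorem Stil0_mulVec_single (s : Fin (m + 1) → Fin n → ℝ) (j : Fin m) :
    Stil0 s *ᵥ Pi.single j 1 = s j.castSucc := by
  rw [mulVec_single_one]; rfl

theorem Stil1_mulVec_single (s : Fin (m + 1) → Fin n → ℝ) (j : Fin m) :
    Stil1 s *ᵥ Pi.single j 1 = s j.succ := by
  rw [mulVec_single_one]; rfl

variable (s : Fin (m + 1 + 1) → Fin n → ℝ) (y : Fin n → ℝ) (t : Fin (m + 1) → ℝ)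

theorem Tmat_mulVec_single_zero :
    Tmat s y t *ᵥ Pi.single 0 1 = t - Pi.single (Fin.last m) (y ⬝ᵥ s 0) := by
  rw [mulVec_single_one]
  ext i
  simp only [col_apply, Tmat, of_apply, Pi.sub_apply, Pi.single_apply, Fin.ext_iff,
    Fin.val_zero, Fin.val_last, Nat.add_sub_cancel]
  split_ifs <;> grind

theorem Tmat_mulVec_single_succ (j : Fin m) :
    Tmat s y t *ᵥ Pi.single j.succ 1 =
      Pi.single j.castSucc 1 - Pi.single (Fin.last m) (y ⬝ᵥ s j.succ.castSucc) := by
  rw [mulVec_single_one]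
  ext i
  simp only [col_apply, Tmat, of_apply, Pi.sub_apply, Pi.single_apply, Fin.ext_iff,
    Fin.val_last, Fin.val_succ, Fin.val_castSucc, Nat.add_sub_cancel]
  split_ifs <;> grind

theorem Stil1_mul_Tmat (ht : Stil1 s *ᵥ t = s 0) :
    Stil1 s * Tmat s y t = (1 - vecMulVec (s (Fin.last _)) y) * Stil0 s := by
  refine ext_of_mulVec_single fun j => ?_
  rw [← mulVec_mulVec, ← mulVec_mulVec, Stil0_mulVec_single, sub_mulVec, one_mulVec,
    vecMulVec_mulVec, op_smul_eq_smul]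
  cases j using Fin.cases with
  | zero =>
    rw [Tmat_mulVec_single_zero, mulVec_sub, ht, mulVec_single, op_smul_eq_smul]
    rfl
  | succ j =>
    rw [Tmat_mulVec_single_succ, mulVec_sub, Stil1_mulVec_single, mulVec_single, op_smul_eq_smul]
    rfl

end Columns

/-- With `U` having orthonormal columns, all of `s̃_{k-m}, …, s̃_k` in the column space of
`U`, and `S̃_{k+1} t = s̃_{k-m}`: the BFGS update of `Uᵀ H̃ U` by `(Uᵀ s̃_k, Uᵀ ỹ_k)` equals
`Uᵀ H̃⁺ U`, where `H̃ = S̃_k L S̃_kᵀ` and `H̃⁺ = S̃_{k+1} (T(t) L T(t)ᵀ + E_m) S̃_{k+1}ᵀ`. -/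
theorem stmt_14 (n m : ℕ) (hm : 1 ≤ m) (U : Matrix (Fin n) (Fin m) ℝ) (hU : Uᵀ * U = 1)
    (s : Fin (m + 1) → Fin n → ℝ) (y : Fin n → ℝ)
    (hs : ∀ i : Fin (m + 1), s i ∈ Submodule.span ℝ (Set.range Uᵀ))
    (L : Matrix (Fin m) (Fin m) ℝ) (t : Fin m → ℝ)
    (ht : (Stil1 s).mulVec t = s 0) :
    bfgsUpdate (Uᵀ * (Stil0 s * L * (Stil0 s)ᵀ) * U) (Uᵀ.mulVec (s (Fin.last m)))
        (Uᵀ.mulVec y) =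
      Uᵀ * (Stil1 s * (Tmat s y t * L * (Tmat s y t)ᵀ + Emat m) * (Stil1 s)ᵀ) * U := by
  obtain ⟨m, rfl⟩ : ∃ k, m = k + 1 := ⟨m - 1, by omega⟩
  have hS : U * Uᵀ * Stil0 s = Stil0 s :=
    mul_transpose_mul_of_forall_mem_span hU fun j => hs j.castSucc
  have hT : (1 - vecMulVec (Uᵀ *ᵥ s (Fin.last _)) (Uᵀ *ᵥ y)) * (Uᵀ * Stil0 s) =
      Uᵀ * Stil1 s * Tmat s y t := by
    rw [← transpose_mul_one_sub_vecMulVec_mul hS, ← Stil1_mul_Tmat s y t ht, Matrix.mul_assoc]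
  have hE : (Uᵀ * Stil1 s) * Emat (m + 1) * (Uᵀ * Stil1 s)ᵀ =
      vecMulVec (Uᵀ *ᵥ s (Fin.last _)) (Uᵀ *ᵥ s (Fin.last _)) := by
    rw [mul_Emat_mul_transpose, ← mulVec_mulVec, Stil1_mulVec_single, Fin.succ_last]
  calc _ = (1 - vecMulVec (Uᵀ *ᵥ s (Fin.last _)) (Uᵀ *ᵥ y)) * (Uᵀ * Stil0 s) * L *
          ((1 - vecMulVec (Uᵀ *ᵥ s (Fin.last _)) (Uᵀ *ᵥ y)) * (Uᵀ * Stil0 s))ᵀ +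
          vecMulVec (Uᵀ *ᵥ s (Fin.last _)) (Uᵀ *ᵥ s (Fin.last _)) := by
        rw [← bfgsUpdate_mul_mul_transpose]
        simp only [transpose_mul, transpose_transpose, Matrix.mul_assoc]
    _ = _ := by
      rw [hT, ← hE]
      simp only [transpose_mul, transpose_transpose, Matrix.mul_add, Matrix.add_mul,
        Matrix.mul_assoc]
end
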